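/- Let m ≥ 2 and r ≥ 1 be integers, set d = 2·m·r and ε = 1/(8r). If for every number of rows n there exists a deterministic (ε, M)-Itemset-Frequency-Indicator sketching scheme for pairs on d items and n rows, then 2^M ≥ (m!)^(r²) (equivalently, M ≥ r² · log₂(m!)). -/

import Mathlib

/-- The frequency of an itemset `T` in a database `D` with `n` rows over `d` items:
the fraction of rows in which every item of `T` occurs. -/
noncomputable def freq {n d : ℕ} (D : Fin n → Fin d → Bool) (T : Finset (Fin d)) : ℝ :=
  ((Finset.univ.filter (fun i : Fin n => ∀ j ∈ T, D i j = true)).card : ℝ) / n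

/-- A deterministic `(ε, M)`-Itemset-Frequency-Indicator sketching scheme for pairs on `d`
items and `n` rows: an encoder into `M`-bit sketches and a decoder answering every pairwise
query correctly. -/
def DetIFIScheme (d n M : ℕ) (ε : ℝ) : Prop :=
  ∃ (Enc : (Fin n → Fin d → Bool) → Fin (2 ^ M))
    (Dec : Fin (2 ^ M) → Fin d → Fin d → Bool),
    ∀ D : Fin n → Fin d → Bool, ∀ a b : Fin d, a ≠ b →
      (freq D {a, b} ≥ ε → Dec (Enc D) a b = true) ∧
      (freq D {a, b} ≤ ε / 2 → Dec (Enc D) a b = false)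

/-! Encode each of the `(m!)^(r²)` matrices `P : Fin r → Fin r → Perm (Fin m)` as a database in
which the left item `(i, a)` and the right item `(j, b)` co-occur in a `1/(4r)`-fraction of the
rows when `b = P i j a` and in a `1/(16r)`-fraction otherwise. The answers to pair queries at
threshold `ε = 1/(8r)` then recover `P`, so the encoder is injective on these databases and
`2^M ≥ (m!)^(r²)`. -/

open Finset

theorem card_filter_forall_mem_eq_mul_pow {α β : Type*} [Fintype α] [DecidableEq α]
    [Fintype β] [DecidableEq β] (S : Finset α) (c : β) :
    #{f : α → β | ∀ a ∈ S, f a = c} * Fintype.card β ^ #S = Fintype.card β ^ Fintype.card α := by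
  have hpi : ({f : α → β | ∀ a ∈ S, f a = c} : Finset (α → β)) =
      Fintype.piFinset fun a => if a ∈ S then {c} else univ := by
    ext f
    simp only [mem_filter, mem_univ, true_and, Fintype.mem_piFinset]
    refine ⟨fun hf a => ?_, fun hf a ha => by simpa [ha] using hf a⟩
    split_ifs with ha <;> simp [hf a, ha]
  rw [hpi, Fintype.card_piFinset, ← card_compl_add_card S, pow_add]
  simp only [apply_ite card, card_singleton, card_univ, prod_ite, prod_const_one, one_mul,
    prod_const]
  congr 3
  ext
  simp

theorem freq_reindex {R I : Type*} [Fintype R] [Fintype I] [DecidableEq I] {n d : ℕ}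
    (eR : R ≃ Fin n) (eI : I ≃ Fin d) (D : R → I → Bool) (T : Finset I) :
    freq (fun x y => D (eR.symm x) (eI.symm y)) (T.map eI.toEmbedding) =
      #{x | ∀ t ∈ T, D x t = true} / Fintype.card R := by
  rw [freq, Fintype.card_congr eR, Fintype.card_fin]
  congr 2
  exact card_equiv eR.symm fun x => by simp [eI.forall_congr_left]

theorem DetIFIScheme.card_le_of_separates {d n M : ℕ} {ε : ℝ} {ι : Type*} [Fintype ι]
    (hS : DetIFIScheme d n M ε) (D : ι → Fin n → Fin d → Bool)
    (hsep : ∀ x y, x ≠ y → ∃ a b, a ≠ b ∧ ε ≤ freq (D x) {a, b} ∧ freq (D y) {a, b} ≤ ε / 2) :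
    Fintype.card ι ≤ 2 ^ M := by
  obtain ⟨Enc, Dec, hDec⟩ := hS
  suffices Function.Injective (Enc ∘ D) by simpa using Fintype.card_le_of_injective _ this
  intro x y hxy
  by_contra hne
  obtain ⟨a, b, hab, hx, hy⟩ := hsep x y hne
  have htrue := (hDec (D x) a b hab).1 hx
  have hfalse := (hDec (D y) a b hab).2 hy
  simp_all

section PermutationDatabase

variable (m r : ℕ)

abbrev PermMatrix := Fin r → Fin r → Equiv.Perm (Fin m)

noncomputable def itemEquiv : Bool × Fin r × Fin m ≃ Fin (2 * m * r) :=
  Fintype.equivFinOfCardEq (by simp; ring)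

noncomputable def rowEquiv : Fin r × (Fin m → Fin 4) ≃ Fin (r * 4 ^ m) :=
  Fintype.equivFinOfCardEq (by simp)

variable {m r}

-- Items `(false, i, a)` and `(true, j, b)` are the left and right copies of `Fin r × Fin m`. In
-- row `(k, f)` the left item `(k, a)` and the right item `(j, P k j a)` both occur iff `f a = 0`.
def permDB (P : PermMatrix m r) : Fin r × (Fin m → Fin 4) → Bool × Fin r × Fin m → Bool
  | (k, f), (false, i, a) => decide (i = k ∧ f a = 0)
  | (k, f), (true, j, b) => decide (f ((P k j).symm b) = 0)

noncomputable def permDatabase (P : PermMatrix m r) : Fin (r * 4 ^ m) → Fin (2 * m * r) → Bool :=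
  fun x y => permDB P ((rowEquiv m r).symm x) ((itemEquiv m r).symm y)

theorem card_filter_permDB_pair (P : PermMatrix m r) (i j : Fin r) (a b : Fin m) :
    #{x | ∀ t ∈ ({(false, i, a), (true, j, b)} : Finset _), permDB P x t = true} =
      #{f : Fin m → Fin 4 | ∀ c ∈ ({a, (P i j).symm b} : Finset _), f c = 0} := by
  have hblock : ({x | ∀ t ∈ ({(false, i, a), (true, j, b)} : Finset _), permDB P x t = true} :
      Finset (Fin r × (Fin m → Fin 4))) =
      ({i} : Finset (Fin r)) ×ˢ
        ({f | ∀ c ∈ ({a, (P i j).symm b} : Finset _), f c = 0} : Finset (Fin m → Fin 4)) := by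
    ext ⟨k, f⟩
    simp only [mem_filter, mem_univ, true_and, mem_product, mem_singleton, forall_mem_insert,
      forall_eq, permDB, decide_eq_true_eq]
    constructor
    · rintro ⟨⟨rfl, ha⟩, hb⟩
      exact ⟨rfl, ha, hb⟩
    · rintro ⟨rfl, ha, hb⟩
      exact ⟨⟨rfl, ha⟩, hb⟩
  rw [hblock, card_product, card_singleton, one_mul]

theorem freq_permDatabase_pair (P : PermMatrix m r) (i j : Fin r) (a b : Fin m) :
    freq (permDatabase P) {itemEquiv m r (false, i, a), itemEquiv m r (true, j, b)} =
      1 / (r * 4 ^ #({a, (P i j).symm b} : Finset _)) := by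
  have hpair : {itemEquiv m r (false, i, a), itemEquiv m r (true, j, b)} =
      ({(false, i, a), (true, j, b)} : Finset _).map (itemEquiv m r).toEmbedding := by
    simp
  have hcount : (#{f : Fin m → Fin 4 | ∀ x ∈ ({a, (P i j).symm b} : Finset _), f x = 0} : ℝ) *
      4 ^ #({a, (P i j).symm b} : Finset _) = 4 ^ m := by
    exact_mod_cast by
      simpa using card_filter_forall_mem_eq_mul_pow ({a, (P i j).symm b} : Finset _) (0 : Fin 4)
  have hpos : (#{f : Fin m → Fin 4 | ∀ x ∈ ({a, (P i j).symm b} : Finset _), f x = 0} : ℝ) ≠ 0 :=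
    left_ne_zero_of_mul (by rw [hcount]; positivity)
  unfold permDatabase
  rw [hpair, freq_reindex, card_filter_permDB_pair]
  simp only [Fintype.card_prod, Fintype.card_fin, Fintype.card_fun]
  push_cast
  rw [← hcount]
  field_simp

theorem permDatabase_separates (P Q : PermMatrix m r) (hPQ : P ≠ Q) :
    ∃ x y, x ≠ y ∧ 1 / (8 * r) ≤ freq (permDatabase P) {x, y} ∧
      freq (permDatabase Q) {x, y} ≤ 1 / (8 * r) / 2 := by
  obtain ⟨i, j, a, hne⟩ : ∃ i j a, P i j a ≠ Q i j a := by
    by_contra! h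
    exact hPQ (funext₂ fun i j => Equiv.ext (h i j))
  have hr : (0 : ℝ) < r := by exact_mod_cast i.pos
  refine ⟨itemEquiv m r (false, i, a), itemEquiv m r (true, j, P i j a), by simp, ?_, ?_⟩
  · rw [freq_permDatabase_pair, Equiv.symm_apply_apply, pair_eq_singleton, card_singleton]
    exact one_div_le_one_div_of_le (by positivity) (by linarith)
  · have hsplit : a ≠ (Q i j).symm (P i j a) := fun h => hne ((Equiv.eq_symm_apply _).1 h).symm
    rw [freq_permDatabase_pair, card_pair hsplit]
    exact le_of_eq (by ring)

end PermutationDatabase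

theorem det_itemset_sketch_counting_general_general (m r M : ℕ)
    (h : ∀ n : ℕ, DetIFIScheme (2 * m * r) n M (1 / (8 * r))) :
    Nat.factorial m ^ (r ^ 2) ≤ 2 ^ M := by
  have hcard : Fintype.card (PermMatrix m r) = Nat.factorial m ^ (r ^ 2) := by
    simp [Fintype.card_perm, ← pow_mul, sq]
  rw [← hcard]
  exact (h _).card_le_of_separates permDatabase permDatabase_separates

theorem det_itemset_sketch_counting_general (m r M : ℕ) (hm : 2 ≤ m) (hr : 1 ≤ r)
    (h : ∀ n : ℕ, DetIFIScheme (2 * m * r) n M (1 / (8 * r))) :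
    Nat.factorial m ^ (r ^ 2) ≤ 2 ^ M :=
  det_itemset_sketch_counting_general_general m r M h
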